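/- arXiv:2107.12961 — 6 statements merged into one kernel-verified Lean document; each statement's English description precedes it below -/
import Mathlib

section
/- Let k be a field, n ≥ 1, and let A, B be n×n matrices over k. Then there exists an n×n matrix C over k such that the matrix C(1 − AB) + B is invertible, where 1 denotes the n×n identity matrix. -/
/-!
Write `K = ker f`. Since `ker f ⊓ ker g = 0`, `g` maps `K` isomorphically onto `g K`, and by
rank–nullity there is room for an injective `ψ : range f → X` whose range meets `g K` only in `0`.
With `s` a section of `f` over its range, let `c` extend `ψ - g ∘ s` from `range f`. Then
`c (f x) + g x = ψ (f x) + g (x - s (f x))` with `x - s (f x) ∈ K`, and both summands vanish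
when the sum does, which forces `f x = 0` and then `g x = 0`, so `x = 0`.
For `M = 1 - A * B` and `N = B` the kernels meet trivially: `B x = 0` and `x = A B x` give `x = 0`.
-/

open Module LinearMap

section

variable {k V W X : Type*} [Field k] [AddCommGroup V] [Module k V] [AddCommGroup W] [Module k W]
  [AddCommGroup X] [Module k X]

theorem Submodule.exists_injective_disjoint_range [FiniteDimensional k V] [FiniteDimensional k X]
    (S : Submodule k X) (hdim : finrank k V + finrank k S ≤ finrank k X) :
    ∃ ψ : V →ₗ[k] X, Function.Injective ψ ∧ Disjoint (range ψ) S := by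
  obtain ⟨U, hU⟩ := S.exists_isCompl
  have hVU : finrank k V ≤ finrank k U := by
    have := Submodule.finrank_add_eq_of_isCompl hU
    omega
  obtain ⟨ψ, hψ⟩ := (finrank_le_iff_exists_linearMap (R := k)).mp hVU
  refine ⟨U.subtype ∘ₗ ψ, U.injective_subtype.comp hψ, ?_⟩
  rw [range_comp]
  exact hU.symm.disjoint.mono_left (Submodule.map_subtype_le U _)

theorem LinearMap.finrank_map_of_disjoint_ker (g : V →ₗ[k] X) {K : Submodule k V}
    (h : Disjoint K (ker g)) : finrank k (K.map g) = finrank k K := by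
  rw [← range_domRestrict]
  exact finrank_range_of_inj (injective_domRestrict_iff.mpr h)

theorem LinearMap.exists_injective_comp_add [FiniteDimensional k V] [FiniteDimensional k X]
    (f : V →ₗ[k] W) (g : V →ₗ[k] X) (hdim : finrank k V ≤ finrank k X)
    (h : Disjoint (ker f) (ker g)) : ∃ c : W →ₗ[k] X, Function.Injective (c ∘ₗ f + g) := by
  obtain ⟨s, hs⟩ := f.rangeRestrict.exists_rightInverse_of_surjective f.range_rangeRestrict
  have hsec : ∀ y : range f, f (s y) = y := fun y =>
    congrArg Subtype.val (LinearMap.congr_fun hs y)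
  have hroom : finrank k (range f) + finrank k ((ker f).map g) ≤ finrank k X := by
    rw [finrank_map_of_disjoint_ker g h, finrank_range_add_finrank_ker]
    exact hdim
  obtain ⟨ψ, hψ, hψg⟩ := Submodule.exists_injective_disjoint_range _ hroom
  obtain ⟨c, hc⟩ := exists_extend (ψ - g ∘ₗ s)
  have hcf : ∀ x, c (f x) = ψ (f.rangeRestrict x) - g (s (f.rangeRestrict x)) :=
    fun x => LinearMap.congr_fun hc (f.rangeRestrict x)
  refine ⟨c, (injective_iff_map_eq_zero _).mpr fun x hx => ?_⟩
  set y := f.rangeRestrict x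
  replace hx : ψ y - g (s y) + g x = 0 := by rwa [LinearMap.add_apply, comp_apply, hcf] at hx
  have hxK : x - s y ∈ ker f := by simp [y, hsec]
  have hψy : ψ y = 0 := by
    refine Submodule.disjoint_def.mp hψg _ (mem_range_self ψ y) ?_
    have : ψ y = -g (x - s y) := by
      rw [map_sub]
      linear_combination (norm := abel) hx
    exact this ▸ neg_mem (Submodule.mem_map_of_mem hxK)
  have hy : y = 0 := hψ (hψy.trans (map_zero ψ).symm)
  have hfx : x ∈ ker f := by simpa [y] using congrArg Subtype.val hy
  have hgx : g x = 0 := by simpa [hy] using hx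
  exact Submodule.disjoint_def.mp h x hfx hgx

end

open Matrix

theorem Matrix.exists_isUnit_mul_add {k m : Type*} [Field k] [Fintype m] [DecidableEq m]
    (M N : Matrix m m k) (h : ∀ x, M *ᵥ x = 0 → N *ᵥ x = 0 → x = 0) :
    ∃ C : Matrix m m k, IsUnit (C * M + N) := by
  obtain ⟨c, hc⟩ := exists_injective_comp_add (toLin' M) (toLin' N) le_rfl
    (Submodule.disjoint_def.mpr fun x hM hN => h x hM hN)
  refine ⟨toMatrix' c, mulVec_injective_iff_isUnit.mp ?_⟩
  have : (toMatrix' c * M + N).mulVecLin = c ∘ₗ toLin' M + toLin' N := by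
    rw [← toLin'_apply', map_add, toLin'_mul, toLin'_toMatrix']
  rw [← coe_mulVecLin, this]
  exact hc

theorem stmt_5_general (k : Type*) [Field k] (n : ℕ)
    (A B : Matrix (Fin n) (Fin n) k) :
    ∃ C : Matrix (Fin n) (Fin n) k, IsUnit (C * (1 - A * B) + B) := by
  refine Matrix.exists_isUnit_mul_add _ _ fun x hAB hB => ?_
  rwa [sub_mulVec, one_mulVec, ← mulVec_mulVec, hB, mulVec_zero, sub_zero] at hAB

/-- **Mather's trick.** For any two `n × n` matrices `A`, `B` over a field `k` (`n ≥ 1`),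
there exists a matrix `C` such that `C * (1 - A * B) + B` is invertible. -/
theorem stmt_5 (k : Type*) [Field k] (n : ℕ) (hn : 1 ≤ n)
    (A B : Matrix (Fin n) (Fin n) k) :
    ∃ C : Matrix (Fin n) (Fin n) k, IsUnit (C * (1 - A * B) + B) :=
  stmt_5_general k n A B
end

section
/- Let (R, 𝔪) be a commutative local ring, n ≥ 1, let A, B be n×n matrices over R, and let v, w ∈ Rⁿ be column vectors satisfying A·w = v and B·v = w. Then there exists an invertible n×n matrix D over R such that D·v = w. -/
/-!
Every matrix `D = B + C (1 - A B)` sends `v` to `w`, because `(1 - A B) v = v - A w = 0`; it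
remains to choose `C` with `D` invertible, and invertibility can be tested over the residue
field. There `B` and `1 - A B` have no common kernel vector (`x = A (B x) + (1 - A B) x`), so `C`
can be taken to send `(1 - A B)(ker B)` isomorphically onto a complement of the image of `B`
(through a left inverse of `1 - A B` on `ker B`), which makes `D` injective.
-/

open Module LinearMap

theorem LinearMap.exists_injective_add_comp_of_disjoint_ker {K V W U : Type*} [DivisionRing K]
    [AddCommGroup V] [Module K V] [AddCommGroup W] [Module K W] [AddCommGroup U] [Module K U]
    [FiniteDimensional K V] [FiniteDimensional K W] (hVW : finrank K V = finrank K W)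
    (f : V →ₗ[K] W) (g : V →ₗ[K] U) (hfg : Disjoint (ker f) (ker g)) :
    ∃ h : U →ₗ[K] W, Function.Injective (f + h ∘ₗ g) := by
  obtain ⟨W', hW'⟩ := Submodule.exists_isCompl (range f)
  have hdim : finrank K (ker f) = finrank K W' := by
    have := f.finrank_range_add_finrank_ker
    have := Submodule.finrank_add_eq_of_isCompl hW'
    omega
  have hg : ker (g ∘ₗ (ker f).subtype) = ⊥ := by
    rwa [ker_comp, ← Submodule.disjoint_iff_comap_eq_bot]
  obtain ⟨ψ, hψ⟩ := exists_leftInverse_of_injective _ hg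
  let e := LinearEquiv.ofFinrankEq _ _ hdim
  refine ⟨W'.subtype ∘ₗ e.toLinearMap ∘ₗ ψ, ?_⟩
  rw [← ker_eq_bot, Submodule.eq_bot_iff]
  intro x hx
  have hsum : f x + (e (ψ (g x)) : W) = 0 := hx
  have hfx : f x = 0 := by
    refine (Submodule.disjoint_def.mp hW'.disjoint) _ ⟨x, rfl⟩ ?_
    rw [eq_neg_of_add_eq_zero_left hsum]
    exact W'.neg_mem (e _).2
  have hψx : ψ (g x) = ⟨x, hfx⟩ := LinearMap.congr_fun hψ ⟨x, hfx⟩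
  rw [hfx, zero_add, hψx, ZeroMemClass.coe_eq_zero, LinearEquiv.map_eq_zero_iff] at hsum
  exact congrArg Subtype.val hsum

namespace Matrix

variable {n : Type*} [Fintype n] [DecidableEq n]

theorem mulVec_add_mul_one_sub_mul {R : Type*} [CommRing R] (A B C : Matrix n n R) {v w : n → R}
    (hA : A *ᵥ w = v) (hB : B *ᵥ v = w) : (B + C * (1 - A * B)) *ᵥ v = w := by
  rw [add_mulVec, ← mulVec_mulVec, sub_mulVec, one_mulVec, ← mulVec_mulVec, hB, hA, sub_self,
    mulVec_zero, add_zero]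

theorem exists_isUnit_add_mul_one_sub_mul_of_field {K : Type*} [Field K] (A B : Matrix n n K) :
    ∃ C : Matrix n n K, IsUnit (B + C * (1 - A * B)) := by
  have hker : Disjoint (ker B.mulVecLin) (ker (1 - A * B).mulVecLin) := by
    refine Submodule.disjoint_def.mpr fun x hBx hABx => ?_
    rw [mem_ker, mulVecLin_apply] at hBx hABx
    rwa [sub_mulVec, one_mulVec, ← mulVec_mulVec, hBx, mulVec_zero, sub_zero] at hABx
  obtain ⟨h, hinj⟩ := exists_injective_add_comp_of_disjoint_ker rfl _ _ hker
  refine ⟨toMatrix' h, mulVec_injective_iff_isUnit.mp ?_⟩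
  convert hinj using 1
  ext x : 1
  simp only [LinearMap.add_apply, LinearMap.coe_comp, Function.comp_apply, mulVecLin_apply,
    add_mulVec, ← mulVec_mulVec, toMatrix'_mulVec]

theorem _root_.RingHom.isUnit_mapMatrix_iff {R S : Type*} [CommRing R] [CommRing S] (f : R →+* S)
    [IsLocalHom f] (M : Matrix n n R) : IsUnit (f.mapMatrix M) ↔ IsUnit M := by
  rw [isUnit_iff_isUnit_det, isUnit_iff_isUnit_det, ← RingHom.map_det, isUnit_map_iff]

theorem exists_isUnit_add_mul_one_sub_mul {R : Type*} [CommRing R] [IsLocalRing R]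
    (A B : Matrix n n R) : ∃ C : Matrix n n R, IsUnit (B + C * (1 - A * B)) := by
  let φ := (IsLocalRing.residue R).mapMatrix (m := n)
  obtain ⟨C', hC'⟩ := exists_isUnit_add_mul_one_sub_mul_of_field (φ A) (φ B)
  obtain ⟨C, rfl⟩ : ∃ C, φ C = C' := IsLocalRing.residue_surjective.comp_left.comp_left C'
  refine ⟨C, ((IsLocalRing.residue R).isUnit_mapMatrix_iff _).mp ?_⟩
  simpa only [φ, map_add, map_mul, map_sub, map_one] using hC'

end Matrix

theorem stmt_6_general (R : Type*) [CommRing R] [IsLocalRing R] (n : ℕ)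
    (A B : Matrix (Fin n) (Fin n) R) (v w : Fin n → R)
    (hA : A.mulVec w = v) (hB : B.mulVec v = w) :
    ∃ D : Matrix (Fin n) (Fin n) R, IsUnit D ∧ D.mulVec v = w := by
  obtain ⟨C, hC⟩ := Matrix.exists_isUnit_add_mul_one_sub_mul A B
  exact ⟨_, hC, Matrix.mulVec_add_mul_one_sub_mul A B C hA hB⟩

/-- Over a commutative local ring `R`, if `A·w = v` and `B·v = w` for column vectors
`v, w ∈ Rⁿ`, then there is an invertible matrix `D` with `D·v = w`. -/
theorem stmt_6 (R : Type*) [CommRing R] [IsLocalRing R] (n : ℕ) (hn : 1 ≤ n)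
    (A B : Matrix (Fin n) (Fin n) R) (v w : Fin n → R)
    (hA : A.mulVec w = v) (hB : B.mulVec v = w) :
    ∃ D : Matrix (Fin n) (Fin n) R, IsUnit D ∧ D.mulVec v = w :=
  stmt_6_general R n A B v w hA hB
end

section
/- Let k be a field of characteristic 0 and let R be a Noetherian complete local k-algebra with maximal ideal 𝔪. Suppose there exist a k-linear derivation d : R → R and an element g ∈ 𝔪 such that d(g) is a unit of R. Then there exists a Noetherian complete local k-algebra S and a k-algebra isomorphism R ≅ S⟦t⟧ with the formal power series ring in one variable over S. -/
/-!
Normalize `d` to a derivation `D` with `D g = 1`. Since `k ⊇ ℚ`, the Taylor map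
`r ↦ ∑ₙ (Dⁿ r / n!) tⁿ` is a `k`-algebra map `R → R⟦t⟧`; reducing its coefficients modulo `g`
gives `φ : R → S⟦t⟧` with `S = R ⧸ (g)`, `φ g = t` and constant term `r mod g`.
Then `ker φ = g · ker φ`, so `ker φ = 0` by Nakayama; and `φ` is onto modulo `φ(𝔪) ∋ t`, which
suffices for a map from an `𝔪`-adically complete ring to the Noetherian local ring `S⟦t⟧`.
The quotient `S` inherits completeness from `R`.
-/

open IsLocalRing PowerSeries

theorem IsPrecomplete.of_surjective {R M N : Type*} [CommRing R] {I : Ideal R}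
    [AddCommGroup M] [Module R M] [AddCommGroup N] [Module R N] [IsPrecomplete I M]
    {f : M →ₗ[R] N} (hf : Function.Surjective f) : IsPrecomplete I N :=
  AdicCompletion.of_surjective_iff.mp fun y => by
    obtain ⟨x, rfl⟩ := AdicCompletion.map_surjective I hf y
    obtain ⟨m, rfl⟩ := AdicCompletion.of_surjective I M x
    exact ⟨f m, (AdicCompletion.map_of _ _ _).symm⟩

theorem isAdicComplete_quotient {R : Type*} [CommRing R] [IsLocalRing R] [IsNoetherianRing R]
    [IsAdicComplete (maximalIdeal R) R] (J : Ideal R) [IsLocalRing (R ⧸ J)] :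
    IsAdicComplete (maximalIdeal (R ⧸ J)) (R ⧸ J) where
  toIsPrecomplete := by
    have : IsPrecomplete (maximalIdeal R) (R ⧸ J) := .of_surjective J.mkQ_surjective
    rw [← map_maximalIdeal_of_surjective _ Ideal.Quotient.mk_surjective]
    exact IsPrecomplete.map_algebraMap_iff.mpr this

theorem PowerSeries.coeff_succ_eq_smul_coeff_derivative {k R : Type*} [Field k] [CommRing R]
    [Algebra k R] (f : R⟦X⟧) (n : ℕ) (hn : ((n + 1 : ℕ) : k) ≠ 0) :
    coeff (n + 1) f = ((n + 1 : ℕ) : k)⁻¹ • coeff n (d⁄dX R f) := by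
  rw [coeff_derivative, ← Nat.cast_succ, ← map_natCast (algebraMap k R), mul_comm,
    ← Algebra.smul_def, inv_smul_smul₀ hn]

namespace Derivation

variable {k R : Type*} [Field k] [CommRing R] [Algebra k R] (D : Derivation k R R)

noncomputable def taylorCoeff (n : ℕ) : R →ₗ[k] R :=
  (n.factorial : k)⁻¹ • (D : Module.End k R) ^ n

@[simp]
theorem taylorCoeff_zero (r : R) : D.taylorCoeff 0 r = r := by
  simp [taylorCoeff]

theorem taylorCoeff_succ (n : ℕ) (r : R) :
    D.taylorCoeff (n + 1) r = ((n + 1 : ℕ) : k)⁻¹ • D.taylorCoeff n (D r) := by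
  simp only [taylorCoeff, LinearMap.smul_apply, smul_smul, Nat.factorial_succ, Nat.cast_mul,
    mul_inv, pow_succ, Module.End.mul_apply, coeFn_coe]

noncomputable def taylorLinearMap : R →ₗ[k] R⟦X⟧ where
  toFun r := PowerSeries.mk fun n => D.taylorCoeff n r
  map_add' a b := by ext; simp
  map_smul' c a := by ext; simp

@[simp]
theorem coeff_taylorLinearMap (n : ℕ) (r : R) :
    coeff n (D.taylorLinearMap r) = D.taylorCoeff n r := by
  simp [taylorLinearMap]

theorem taylorLinearMap_one : D.taylorLinearMap 1 = 1 := by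
  ext (_ | n)
  · simp
  · simp [taylorCoeff_succ]

variable [CharZero k]

theorem derivative_taylorLinearMap (r : R) :
    d⁄dX R (D.taylorLinearMap r) = D.taylorLinearMap (D r) := by
  ext n
  have hn : ((n + 1 : ℕ) : k) ≠ 0 := Nat.cast_ne_zero.mpr n.succ_ne_zero
  rw [coeff_derivative, coeff_taylorLinearMap, coeff_taylorLinearMap, taylorCoeff_succ,
    smul_mul_assoc, ← Nat.cast_add_one, ← nsmul_eq_mul', ← Nat.cast_smul_eq_nsmul k,
    inv_smul_smul₀ hn]

-- Induction on the coefficient: both sides have the same constant term, and their `t`-derivatives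
-- agree by the inductive hypothesis since `d⁄dX` commutes with the Taylor map.
theorem taylorLinearMap_mul (a b : R) :
    D.taylorLinearMap (a * b) = D.taylorLinearMap a * D.taylorLinearMap b := by
  ext n
  induction n generalizing a b with
  | zero => simp [taylorLinearMap]
  | succ n ih =>
    have hn : ((n + 1 : ℕ) : k) ≠ 0 := Nat.cast_ne_zero.mpr n.succ_ne_zero
    rw [coeff_succ_eq_smul_coeff_derivative _ n hn, coeff_succ_eq_smul_coeff_derivative _ n hn,
      derivative_taylorLinearMap, leibniz, Derivation.leibniz, map_add, smul_eq_mul, smul_eq_mul,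
      smul_eq_mul, smul_eq_mul, derivative_taylorLinearMap, derivative_taylorLinearMap, map_add,
      map_add, ih, ih]

noncomputable def taylor : R →ₐ[k] R⟦X⟧ :=
  .ofLinearMap D.taylorLinearMap D.taylorLinearMap_one D.taylorLinearMap_mul

@[simp]
theorem coeff_taylor (n : ℕ) (r : R) : coeff n (D.taylor r) = D.taylorCoeff n r :=
  D.coeff_taylorLinearMap n r

theorem taylor_eq_C_add_X {g : R} (hg : D g = 1) : D.taylor g = C g + X := by
  ext (_ | _ | n)
  · simp
  · simp [taylorCoeff_succ, hg]
  · simp [taylorCoeff_succ, hg, coeff_X]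

end Derivation

section MapToPowerSeries

variable {R S : Type*} [CommRing R] [IsLocalRing R] [CommRing S] {g : R}
  (φ : R →+* S⟦X⟧) (hφg : φ g = X)
include hφg

theorem injective_of_map_eq_X [IsNoetherianRing R] (hg : g ∈ maximalIdeal R)
    (hker : ∀ r, constantCoeff (φ r) = 0 → r ∈ Ideal.span {g}) : Function.Injective φ := by
  rw [injective_iff_map_eq_zero, ← RingHom.ker_eq_bot_iff_eq_zero]
  refine Submodule.eq_bot_of_le_smul_of_le_jacobson_bot (Ideal.span {g}) _
    (IsNoetherian.noetherian _) (fun r hr => ?_)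
    ((Ideal.span_singleton_le_iff_mem _).mpr hg |>.trans (maximalIdeal_le_jacobson _))
  rw [RingHom.mem_ker] at hr
  obtain ⟨s, rfl⟩ := Ideal.mem_span_singleton'.mp (hker r (by rw [hr, map_zero]))
  have hs : φ s = 0 := X_mul_cancel (by rw [mul_zero, ← hφg, ← map_mul, mul_comm, hr])
  rw [mul_comm, ← smul_eq_mul]
  exact Submodule.smul_mem_smul (Ideal.mem_span_singleton_self g) hs

theorem surjective_of_map_eq_X [IsPrecomplete (maximalIdeal R) R] [IsLocalRing S]
    [IsNoetherianRing S] (hg : g ∈ maximalIdeal R)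
    (hsurj : Function.Surjective (constantCoeff.comp φ)) : Function.Surjective φ := by
  have : IsLocalHom (constantCoeff.comp φ) := .of_surjective _ hsurj
  have : IsLocalHom φ := isLocalHom_of_comp φ constantCoeff
  have : IsHausdorff ((maximalIdeal R).map φ) S⟦X⟧ :=
    .of_isLocalRing _ _ (map_maximalIdeal_lt_top φ).ne
  refine surjective_of_mk_map_comp_surjective (I := maximalIdeal R) φ ?_
  refine Ideal.Quotient.mk_surjective.forall.mpr fun F => ?_
  obtain ⟨r, hr⟩ := hsurj (constantCoeff F)
  obtain ⟨G, hG⟩ := X_dvd_iff.mpr (show constantCoeff (F - φ r) = 0 from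
    (map_sub _ _ _).trans (sub_eq_zero.mpr hr.symm))
  refine ⟨r, (Ideal.Quotient.eq.mpr ?_).symm⟩
  rw [hG, ← hφg]
  exact Ideal.mul_mem_right _ _ (Ideal.mem_map_of_mem φ hg)

end MapToPowerSeries

/-- If a Noetherian complete local `k`-algebra `R` (`char k = 0`) admits a `k`-linear
derivation `d : R → R` and an element `g` of the maximal ideal with `d g` a unit, then
`R` is isomorphic as a `k`-algebra to a formal power series ring in one variable over a
Noetherian complete local `k`-algebra `S`. -/
theorem stmt_12 (k : Type) [Field k] [CharZero k]
    (R : Type) [CommRing R] [Algebra k R] [IsLocalRing R] [IsNoetherianRing R]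
    [IsAdicComplete (IsLocalRing.maximalIdeal R) R]
    (d : Derivation k R R) (g : R) (hg : g ∈ IsLocalRing.maximalIdeal R)
    (hdg : IsUnit (d g)) :
    ∃ (S : Type) (_ : CommRing S) (_ : Algebra k S) (_ : IsLocalRing S)
      (_ : IsNoetherianRing S) (_ : IsAdicComplete (IsLocalRing.maximalIdeal S) S),
      Nonempty (R ≃ₐ[k] PowerSeries S) := by
  let D : Derivation k R R := (↑hdg.unit⁻¹ : R) • d
  have hDg : D g = 1 := hdg.val_inv_mul
  let J := Ideal.span {g}
  have : Nontrivial (R ⧸ J) := Ideal.Quotient.nontrivial_iff.mpr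
    (by rwa [Ne, Ideal.span_singleton_eq_top, ← mem_nonunits_iff, ← mem_maximalIdeal])
  have : IsLocalRing (R ⧸ J) := .of_surjective' _ Ideal.Quotient.mk_surjective
  let φ : R →ₐ[k] (R ⧸ J)⟦X⟧ := (mapAlgHom (Ideal.Quotient.mkₐ k J)).comp D.taylor
  have hφg : φ g = X := by simp [φ, mapAlgHom_apply, D.taylor_eq_C_add_X hDg, J]
  have hφ : ∀ r, constantCoeff (φ r) = Ideal.Quotient.mk J r := fun r => by
    simp [φ, mapAlgHom_apply, ← coeff_zero_eq_constantCoeff_apply, coeff_map]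
  refine ⟨R ⧸ J, inferInstance, inferInstance, inferInstance, inferInstance,
    isAdicComplete_quotient J, ⟨AlgEquiv.ofBijective φ ⟨?_, ?_⟩⟩⟩
  · exact injective_of_map_eq_X (φ : R →+* (R ⧸ J)⟦X⟧) hφg hg fun r hr =>
      Ideal.Quotient.eq_zero_iff_mem.mp ((hφ r).symm.trans hr)
  · exact surjective_of_map_eq_X (φ : R →+* (R ⧸ J)⟦X⟧) hφg hg fun r =>
      ⟨r.out, (hφ r.out).trans (Ideal.Quotient.mk_out r)⟩
end

section
/- Let k be an algebraically closed field of characteristic p > 0 and let f = x^p + y^p·z ∈ k[x,y,z]. Let (a,b,c) ∈ k³ satisfy a^p + b^p·c = 0. Then the k-algebras k⟦x,y,z⟧/(f(x+a, y+b, z+c)) and k⟦x,y,z⟧/(f) are isomorphic if and only if a = 0 and b = 0. In other words, the isosingular locus at the origin of the hypersurface defined by f consists exactly of the points of the z-axis. -/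
/-!
If `b ≠ 0`, the translated equation `x^p + y^p z + c y^p + b^p z` has the nonzero linear
term `b^p z`, so its complete local ring has a two-dimensional Zariski tangent space `m/m²`,
while that of `f` is three-dimensional (`f ∈ m²` as `p ≥ 2`). We detect the dimension of
`m/m²` through surjective `k`-algebra maps onto `k ⊕ k³` with square-zero `k³`: such a map
is determined on `m` by the images of the variables, since `m = (x, y, z)`.
If `a = b = 0`, write `c = γ^p`; then `x^p + y^p (z + c) = (x + γ y)^p + y^p z`, and the
shear `x ↦ x + γ y` is an automorphism of `k⟦x,y,z⟧` carrying `f` to the translate.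
-/

open MvPowerSeries

/-- The polynomial `f(x + a)` obtained from `f` by translating the variables by `a`. -/
noncomputable def translatePoly {N : ℕ} {k : Type*} [CommRing k]
    (a : Fin N → k) (f : MvPolynomial (Fin N) k) : MvPolynomial (Fin N) k :=
  MvPolynomial.aeval (fun j => MvPolynomial.X j + MvPolynomial.C (a j)) f

namespace TrivSqZeroExt

variable {R M : Type*} [CommSemiring R] [AddCommMonoid M] [Module R M] [Module Rᵐᵒᵖ M]
  [IsCentralScalar R M]

lemma pow_eq_zero_of_fst_eq_zero {x : TrivSqZeroExt R M} (hx : x.fst = 0) {n : ℕ}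
    (hn : 2 ≤ n) : x ^ n = 0 := by
  ext
  · simp [hx, show n ≠ 0 by omega]
  · simp [hx, show n - 1 ≠ 0 by omega]

end TrivSqZeroExt

namespace MvPowerSeries

section Substitution

variable {σ R : Type*} [CommRing R]

noncomputable def substAlgEquiv {a b : σ → MvPowerSeries σ R} (ha : HasSubst a)
    (hb : HasSubst b) (hab : ∀ i, subst b (a i) = X i) (hba : ∀ i, subst a (b i) = X i) :
    MvPowerSeries σ R ≃ₐ[R] MvPowerSeries σ R :=
  AlgEquiv.ofAlgHom (substAlgHom ha) (substAlgHom hb)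
    (by
      ext1 f
      rw [AlgHom.comp_apply, substAlgHom_comp_substAlgHom_apply]
      simp [hba, subst_self])
    (by
      ext1 f
      rw [AlgHom.comp_apply, substAlgHom_comp_substAlgHom_apply]
      simp [hab, subst_self])

@[simp]
lemma substAlgEquiv_apply {a b : σ → MvPowerSeries σ R} (ha : HasSubst a)
    (hb : HasSubst b) (hab : ∀ i, subst b (a i) = X i) (hba : ∀ i, subst a (b i) = X i)
    (f : MvPowerSeries σ R) : substAlgEquiv ha hb hab hba f = subst a f :=
  substAlgHom_apply ha f

variable [DecidableEq σ]

noncomputable def shear (i j : σ) (γ : R) : σ → MvPowerSeries σ R :=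
  Function.update X i (X i + C γ * X j)

lemma hasSubst_shear (i j : σ) (γ : R) : HasSubst (shear i j γ) where
  const_coeff l := by
    rcases eq_or_ne l i with rfl | hl <;> simp [shear, *]
  coeff_zero d := by
    refine (((HasSubst.X (S := R)).coeff_zero d).union (Set.finite_singleton i)).subset
      fun l hl => ?_
    rcases eq_or_ne l i with rfl | hli
    · exact Or.inr rfl
    · exact Or.inl (by simpa [shear, hli] using hl)

lemma shear_zero (i j : σ) : shear i j (0 : R) = X := by
  simp [shear]

lemma subst_shear_shear {i j : σ} (hij : i ≠ j) (γ δ : R) (l : σ) :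
    subst (shear i j δ) (shear i j γ l) = shear i j (γ + δ) l := by
  have hδ := hasSubst_shear i j δ
  rcases eq_or_ne l i with rfl | hl
  · have : shear l j γ l = X l + C γ * X j := Function.update_self ..
    rw [this, subst_add hδ, subst_mul hδ, subst_X hδ, subst_X hδ, subst_C]
    simp [shear, hij.symm, map_add]
    ring
  · have : shear i j γ l = X l := Function.update_of_ne hl ..
    rw [this, subst_X hδ]
    simp [shear, hl]

noncomputable def shearEquiv {i j : σ} (hij : i ≠ j) (γ : R) :
    MvPowerSeries σ R ≃ₐ[R] MvPowerSeries σ R :=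
  substAlgEquiv (hasSubst_shear i j γ) (hasSubst_shear i j (-γ))
    (fun l => by rw [subst_shear_shear hij, add_neg_cancel, shear_zero])
    (fun l => by rw [subst_shear_shear hij, neg_add_cancel, shear_zero])

lemma shearEquiv_coe {i j : σ} (hij : i ≠ j) (γ : R) (f : MvPolynomial σ R) :
    shearEquiv hij γ f = MvPolynomial.aeval (shear i j γ) f := by
  rw [shearEquiv, substAlgEquiv_apply, subst_coe]

end Substitution

open TrivSqZeroExt

section CommSemiring

variable {σ R : Type*} [CommSemiring R]

/-- Reduction modulo the square of the ideal of the variables: `f ↦ (f(0), ∂f/∂Xᵢ(0))`. -/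
noncomputable def toTrivSqZeroExt : MvPowerSeries σ R →ₐ[R] TrivSqZeroExt R (σ → R) where
  toFun f := inl (constantCoeff f) + inr fun i => coeff (Finsupp.single i 1) f
  map_one' := by
    classical
    ext i <;> simp [coeff_one]
  map_mul' f g := by
    classical
    ext i
    · simp
    · have h1 : Finset.HasAntidiagonal.antidiagonal (1 : ℕ) = {(0, 1), (1, 0)} := rfl
      simp [coeff_mul, Finsupp.antidiagonal_single, h1, mul_comm]
  map_zero' := by ext <;> simp
  map_add' f g := by ext <;> simp
  commutes' r := by
    classical
    ext i <;> simp [algebraMap_apply, algebraMap_eq_inl, coeff_C]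

@[simp]
lemma toTrivSqZeroExt_X [DecidableEq σ] (i : σ) :
    toTrivSqZeroExt (X i : MvPowerSeries σ R) = inr (Pi.single i 1) := by
  ext j
  · simp [toTrivSqZeroExt]
  · simp [toTrivSqZeroExt, coeff_X, Pi.single_apply, Finsupp.single_left_inj one_ne_zero,
      eq_comm]

lemma toTrivSqZeroExt_surjective [Finite σ] :
    Function.Surjective (toTrivSqZeroExt : MvPowerSeries σ R → _) := by
  classical
  have := Fintype.ofFinite σ
  intro t
  refine ⟨C t.fst + ∑ i, C (t.snd i) * X i, ?_⟩
  ext j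
  · simp [toTrivSqZeroExt]
  · simp [toTrivSqZeroExt, coeff_X, coeff_C, Finsupp.single_left_inj one_ne_zero, eq_comm]

lemma exists_eq_C_add_sum_X_mul [Fintype σ] (f : MvPowerSeries σ R) :
    ∃ u : σ → MvPowerSeries σ R, f = C (constantCoeff f) + ∑ i, X i * u i := by
  classical
  let : LinearOrder σ := LinearOrder.lift' _ (Fintype.equivFin σ).injective
  -- each monomial of positive degree is divided by its smallest variable
  set u : σ → MvPowerSeries σ R := fun i d =>
    if (d + Finsupp.single i 1).support.min = (i : WithTop σ) then
      coeff (d + Finsupp.single i 1) f else 0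
  refine ⟨u, ?_⟩
  ext d
  have hterm (i : σ) : coeff d (X i * u i) =
      if d.support.min = (i : WithTop σ) then coeff d f else 0 := by
    rw [X_def, coeff_monomial_mul, one_mul]
    by_cases hle : Finsupp.single i 1 ≤ d
    · rw [if_pos hle]
      change ite ((d - _ + _).support.min = _) _ _ = _
      rw [tsub_add_cancel_of_le hle]
    · have hi : d.support.min ≠ i := fun h => hle <| Finsupp.single_le_iff.mpr <|
        Nat.one_le_iff_ne_zero.mpr <| Finsupp.mem_support_iff.mp (Finset.mem_of_min h)
      rw [if_neg hle, if_neg hi]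
  simp only [map_add, map_sum, hterm]
  rcases eq_or_ne d 0 with rfl | hd
  · simp
  · obtain ⟨m, hm⟩ := Finset.min_of_nonempty (Finsupp.support_nonempty_iff.mpr hd)
    simp [hm, coeff_C, hd]

end CommSemiring

section Field

variable {σ K M : Type*} [Field K] [AddCommGroup M] [Module K M] [Module Kᵐᵒᵖ M]
  [IsCentralScalar K M]

lemma fst_algHom_X (Ψ : MvPowerSeries σ K →ₐ[K] TrivSqZeroExt K M) (i : σ) :
    (Ψ (X i)).fst = 0 := by
  by_contra h
  have hu : IsUnit (X i - algebraMap K (MvPowerSeries σ K) (Ψ (X i)).fst) := by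
    simpa [isUnit_iff_constantCoeff, algebraMap_apply] using h
  have := hu.map Ψ
  rw [map_sub, AlgHom.commutes, algebraMap_eq_inl, isUnit_iff_isUnit_fst, fst_sub, fst_inl,
    sub_self] at this
  exact not_isUnit_zero this

lemma snd_algHom_mem_span [Fintype σ] (Ψ : MvPowerSeries σ K →ₐ[K] TrivSqZeroExt K M)
    (f : MvPowerSeries σ K) :
    (Ψ f).snd ∈ Submodule.span K (Set.range fun i => (Ψ (X i)).snd) := by
  obtain ⟨u, hu⟩ := exists_eq_C_add_sum_X_mul f
  have hX_mul (i : σ) : (Ψ (X i * u i)).snd = (Ψ (u i)).fst • (Ψ (X i)).snd := by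
    rw [map_mul, snd_mul, fst_algHom_X, zero_smul, zero_add, op_smul_eq_smul]
  rw [hu, map_add, snd_add, c_eq_algebraMap, AlgHom.commutes, algebraMap_eq_inl, snd_inl,
    zero_add, map_sum, snd_sum]
  exact Submodule.sum_mem _ fun i _ => hX_mul i ▸ Submodule.smul_mem _ _
    (Submodule.subset_span ⟨i, rfl⟩)

lemma span_snd_algHom_X_eq_top [Fintype σ] {Ψ : MvPowerSeries σ K →ₐ[K] TrivSqZeroExt K M}
    (hΨ : Function.Surjective Ψ) :
    Submodule.span K (Set.range fun i => (Ψ (X i)).snd) = ⊤ := by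
  refine Submodule.eq_top_iff'.mpr fun v => ?_
  obtain ⟨f, hf⟩ := hΨ (inr v)
  simpa [hf] using snd_algHom_mem_span Ψ f

end Field

section Quotient

variable {σ R : Type*} [CommRing R]

lemma exists_surjective_quotient_span_singleton_toTrivSqZeroExt [Finite σ]
    {f : MvPowerSeries σ R} (hf : toTrivSqZeroExt f = 0) :
    ∃ Ψ : (MvPowerSeries σ R ⧸ Ideal.span {f}) →ₐ[R] TrivSqZeroExt R (σ → R),
      Function.Surjective Ψ := by
  refine ⟨Ideal.Quotient.liftₐ _ toTrivSqZeroExt fun g hg => ?_, ?_⟩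
  · obtain ⟨h, rfl⟩ := Ideal.mem_span_singleton'.mp hg
    rw [map_mul, hf, mul_zero]
  · exact Ideal.Quotient.lift_surjective_of_surjective _ _ toTrivSqZeroExt_surjective

end Quotient

end MvPowerSeries

open MvPowerSeries TrivSqZeroExt

section WhitneyUmbrella

variable {k : Type*} [Field k]

lemma coe_translatePoly_umbrella (a b c : k) (p : ℕ) :
    ((translatePoly ![a, b, c]
        (MvPolynomial.X 0 ^ p + MvPolynomial.X 1 ^ p * MvPolynomial.X 2) :
      MvPolynomial (Fin 3) k) : MvPowerSeries (Fin 3) k) =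
      (X 0 + C a) ^ p + (X 1 + C b) ^ p * (X 2 + C c) := by
  simp [translatePoly]

lemma toTrivSqZeroExt_umbrella {p : ℕ} (hp : 2 ≤ p) :
    toTrivSqZeroExt ((MvPolynomial.X 0 ^ p + MvPolynomial.X 1 ^ p * MvPolynomial.X 2 :
      MvPolynomial (Fin 3) k) : MvPowerSeries (Fin 3) k) = 0 := by
  simp [pow_eq_zero_of_fst_eq_zero (x := inr _) rfl hp]

lemma not_surjective_quotient_translate_umbrella {p : ℕ} [Fact p.Prime] [CharP k p]
    {a b c : k} (hb : b ≠ 0) (habc : a ^ p + b ^ p * c = 0)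
    (Ψ : (MvPowerSeries (Fin 3) k ⧸
        Ideal.span {(X 0 + C a) ^ p + (X 1 + C b) ^ p * (X 2 + C c)}) →ₐ[k]
      TrivSqZeroExt k (Fin 3 → k)) :
    ¬ Function.Surjective Ψ := by
  classical
  intro hΨ
  set Φ := Ψ.comp (Ideal.Quotient.mkₐ k _)
  have hΦ : Function.Surjective Φ := hΨ.comp (Ideal.Quotient.mkₐ_surjective k _)
  have hX2 : Φ (X 2) = 0 := by
    have : CharP (TrivSqZeroExt k (Fin 3 → k)) p :=
      charP_of_injective_algebraMap inl_injective p
    have hpow (i : Fin 3) : Φ (X i) ^ p = 0 :=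
      pow_eq_zero_of_fst_eq_zero (fst_algHom_X Φ i) (Fact.out : p.Prime).two_le
    have hg : Φ ((X 0 + C a) ^ p + (X 1 + C b) ^ p * (X 2 + C c)) = 0 := by
      simp [Φ]
    simp only [map_add, map_mul, map_pow, add_pow_char, hpow, zero_add, c_eq_algebraMap,
      AlgHom.commutes, algebraMap_eq_inl] at hg
    have h0 : inl a ^ p + inl b ^ p * inl c = (0 : TrivSqZeroExt k (Fin 3 → k)) := by
      simp [← inl_mul, ← inl_add, habc]
    have : inl (b ^ p) * Φ (X 2) = 0 := by
      rw [← inl_pow]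
      linear_combination hg - h0
    exact (isUnit_inl_iff.mpr (pow_ne_zero p hb).isUnit).mul_right_eq_zero.mp this
  have hle : Submodule.span k (Set.range fun i => (Φ (X i)).snd) ≤
      Submodule.span k {(Φ (X 0)).snd, (Φ (X 1)).snd} := by
    refine Submodule.span_le.mpr (Set.range_subset_iff.mpr fun i => ?_)
    fin_cases i
    · exact Submodule.subset_span (by simp)
    · exact Submodule.subset_span (by simp)
    · simp [hX2]
  rw [span_snd_algHom_X_eq_top hΦ, top_le_iff] at hle
  have := finrank_span_finset_le_card (R := k)
    ({(Φ (X 0)).snd, (Φ (X 1)).snd} : Finset (Fin 3 → k))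
  rw [Set.finrank, Finset.coe_insert, Finset.coe_singleton, hle, finrank_top,
    Module.finrank_fin_fun] at this
  have := this.trans (Finset.card_le_two)
  omega

lemma shearEquiv_umbrella {p : ℕ} [Fact p.Prime] [CharP k p] (γ : k) :
    shearEquiv (zero_ne_one : (0 : Fin 3) ≠ 1) γ
        ((MvPolynomial.X 0 ^ p + MvPolynomial.X 1 ^ p * MvPolynomial.X 2 :
          MvPolynomial (Fin 3) k) : MvPowerSeries (Fin 3) k) =
      X 0 ^ p + X 1 ^ p * (X 2 + C (γ ^ p)) := by
  have : CharP (MvPowerSeries (Fin 3) k) p :=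
    charP_of_injective_algebraMap (algebraMap k _).injective p
  rw [shearEquiv_coe]
  simp [shear, add_pow_char, mul_pow]
  ring

end WhitneyUmbrella

/-- For the Whitney umbrella `f = x^p + y^p·z` over an algebraically closed field of
characteristic `p > 0` and a point `(a,b,c)` on `V(f)`, the complete local rings
`k⟦x,y,z⟧/(f(x+a, y+b, z+c))` and `k⟦x,y,z⟧/(f)` are isomorphic as `k`-algebras iff
`a = 0` and `b = 0`: the isosingular locus at the origin is exactly the `z`-axis. -/
theorem stmt_15 (k : Type) [Field k] [IsAlgClosed k] (p : ℕ) [CharP k p] (hp : 0 < p)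
    (a b c : k) (habc : a ^ p + b ^ p * c = 0) :
    Nonempty
      ((MvPowerSeries (Fin 3) k ⧸
          Ideal.span {((translatePoly ![a, b, c]
              (MvPolynomial.X 0 ^ p + MvPolynomial.X 1 ^ p * MvPolynomial.X 2) :
            MvPolynomial (Fin 3) k) : MvPowerSeries (Fin 3) k)}) ≃ₐ[k]
       (MvPowerSeries (Fin 3) k ⧸
          Ideal.span {((MvPolynomial.X 0 ^ p + MvPolynomial.X 1 ^ p * MvPolynomial.X 2 :
            MvPolynomial (Fin 3) k) : MvPowerSeries (Fin 3) k)})) ↔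
      a = 0 ∧ b = 0 := by
  have : Fact p.Prime := ⟨CharP.char_prime_of_ne_zero k hp.ne'⟩
  rw [coe_translatePoly_umbrella]
  constructor
  · rintro ⟨e⟩
    have hb : b = 0 := by
      by_contra hb
      obtain ⟨Ψ, hΨ⟩ := exists_surjective_quotient_span_singleton_toTrivSqZeroExt
        (toTrivSqZeroExt_umbrella (k := k) (Fact.out : p.Prime).two_le)
      exact not_surjective_quotient_translate_umbrella hb habc (Ψ.comp e)
        (hΨ.comp e.surjective)
    subst hb
    simpa [hp.ne'] using habc
  · rintro ⟨rfl, rfl⟩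
    obtain ⟨γ, rfl⟩ := IsAlgClosed.exists_pow_nat_eq c hp
    refine ⟨(Ideal.quotientEquivAlg _ _ (shearEquiv (zero_ne_one : (0 : Fin 3) ≠ 1) γ)
      ?_).symm⟩
    rw [Ideal.map_span, Set.image_singleton, RingHom.coe_coe, shearEquiv_umbrella]
    simp
end

section
/- Let k be a field of characteristic p > 0 and let f = x^p + y^p·z ∈ k⟦x,y,z⟧. Then every k-linear derivation d : k⟦x,y,z⟧ → k⟦x,y,z⟧ satisfying d(f) ∈ (f) also satisfies d(z) ∈ (f); in particular the constant term of d(z) is 0, so no derivation preserving the ideal (f) has d(z) a unit. -/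
/-!
In characteristic `p` the `p`-th powers are killed by every derivation, so `d f = y ^ p * d z`.
The variable `y` is prime in `k⟦x,y,z⟧` and does not divide `f` (modulo `y`, `f` is `x ^ p`),
so `f ∣ y ^ p * d z` forces `f ∣ d z`; and `f` has no constant term.
-/

open MvPowerSeries

theorem Derivation.map_pow_char {R A M : Type*} [CommSemiring R] [CommSemiring A] [Algebra R A]
    [AddCommMonoid M] [Module A M] [Module R M] (D : Derivation R A M) (p : ℕ) [CharP R p]
    (a : A) : D (a ^ p) = 0 := by
  rw [D.leibniz_pow, ← Nat.cast_smul_eq_nsmul R, CharP.cast_eq_zero, zero_smul]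

theorem Prime.dvd_of_dvd_pow_mul {M : Type*} [CommMonoidWithZero M] [IsCancelMulZero M]
    {q f h : M} (hq : Prime q) (hqf : ¬q ∣ f) (n : ℕ) (hf : f ∣ q ^ n * h) : f ∣ h := by
  obtain ⟨g, hg⟩ := hf
  obtain ⟨g', rfl⟩ := hq.pow_dvd_of_dvd_mul_left n hqf ⟨h, hg.symm⟩
  refine ⟨g', mul_left_cancel₀ (pow_ne_zero n hq.ne_zero) ?_⟩
  rw [hg, mul_left_comm]

namespace MvPowerSeries

instance {σ R : Type*} [CommRing R] [IsDomain R] : IsDomain (MvPowerSeries σ R) :=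
  NoZeroDivisors.to_isDomain _

theorem X_prime {σ R : Type*} [CommRing R] [IsDomain R] (i : σ) :
    Prime (X i : MvPowerSeries σ R) := by
  classical
  let e := (renameEquiv R (Equiv.optionSubtypeNe i).symm).trans (optionEquivLeft _ R)
  have he : e (X i) = PowerSeries.X := by
    simp [e]
  rw [← MulEquiv.prime_iff e, he]
  exact PowerSeries.X_prime

theorem X_not_dvd_X {σ R : Type*} [Semiring R] [Nontrivial R] {i j : σ} (hij : i ≠ j) :
    ¬(X i : MvPowerSeries σ R) ∣ X j := by
  rw [X_dvd_iff, not_forall]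
  exact ⟨Finsupp.single j 1, by simp [hij]⟩

end MvPowerSeries

/-- Let `f = x^p + y^p·z` over a field of characteristic `p > 0`.  Every `k`-linear
derivation `d` of `k⟦x,y,z⟧` with `d f ∈ (f)` satisfies `d z ∈ (f)`; in particular the
constant term of `d z` is `0`, so `d z` is not a unit. -/
theorem stmt_16 (k : Type) [Field k] (p : ℕ) [CharP k p] (hp : 0 < p)
    (d : Derivation k (MvPowerSeries (Fin 3) k) (MvPowerSeries (Fin 3) k))
    (hd : d ((X 0) ^ p + (X 1) ^ p * X 2) ∈
      Ideal.span {((X 0) ^ p + (X 1) ^ p * X 2 : MvPowerSeries (Fin 3) k)}) :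
    d (X 2) ∈ Ideal.span {((X 0) ^ p + (X 1) ^ p * X 2 : MvPowerSeries (Fin 3) k)} ∧
    constantCoeff (d (X 2)) = 0 ∧
    ¬ IsUnit (d (X 2)) := by
  set f : MvPowerSeries (Fin 3) k := X 0 ^ p + X 1 ^ p * X 2
  have hdf : d f = X 1 ^ p * d (X 2) := by
    rw [map_add, d.leibniz, d.map_pow_char, d.map_pow_char, smul_zero, zero_add, add_zero,
      smul_eq_mul]
  have hy_not_dvd_f : ¬(X 1 : MvPowerSeries (Fin 3) k) ∣ f := by
    rw [dvd_add_left (dvd_mul_of_dvd_left (dvd_pow_self _ hp.ne') _)]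
    exact fun h => X_not_dvd_X (by decide) ((X_prime 1).dvd_of_dvd_pow h)
  have hf_dvd : f ∣ d (X 2) :=
    (X_prime 1).dvd_of_dvd_pow_mul hy_not_dvd_f p (hdf ▸ Ideal.mem_span_singleton.mp hd)
  have hf0 : constantCoeff f = 0 := by simp [f, hp.ne']
  have hdz0 : constantCoeff (d (X 2)) = 0 := by
    obtain ⟨c, hc⟩ := hf_dvd
    rw [hc, map_mul, hf0, zero_mul]
  refine ⟨Ideal.mem_span_singleton.mpr hf_dvd, hdz0, fun hu => ?_⟩
  simpa [hdz0] using isUnit_iff_constantCoeff.mp hu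
end

section
/- Let k be a field of characteristic 2 and let f̃ = x² + y³ + z·y² ∈ k⟦x,y,z⟧. Then there is no k-linear derivation d : k⟦x,y,z⟧ → k⟦x,y,z⟧ satisfying d(f̃) ∈ (f̃) and whose values have constant terms d(x)(0) = 0, d(y)(0) = 0 and d(z)(0) = 1. -/
open MvPowerSeries Finsupp

/-!
In characteristic `2` the derivative of `f̃ = x² + y³ + z y²` collapses to `y² (d y + d z)`,
whose coefficient of `y²` is the constant term of `d y + d z`, namely `1`. On the other hand
no monomial of `f̃` divides `y²`, so every multiple of `f̃` has vanishing `y²`-coefficient.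
-/

theorem Derivation.map_sq_add_cube_add_mul_sq_of_charTwo {R A M : Type*} [CommSemiring R]
    [CharP R 2] [CommSemiring A] [Algebra R A] [AddCommMonoid M] [Module A M] [Module R M]
    (D : Derivation R A M) (a b c : A) :
    D (a ^ 2 + b ^ 3 + c * b ^ 2) = b ^ 2 • (D b + D c) := by
  have two_nsmul_eq_zero (m : M) : 2 • m = 0 := by
    rw [← Nat.cast_smul_eq_nsmul R, Nat.cast_ofNat, CharTwo.two_eq_zero, zero_smul]
  have map_cube : D (b ^ 3) = b ^ 2 • D b := by
    rw [D.leibniz_pow, show 3 = 2 + 1 from rfl, add_smul, two_nsmul_eq_zero, zero_add, one_smul]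
  have map_mul_sq : D (c * b ^ 2) = b ^ 2 • D c := by
    rw [D.leibniz, D.leibniz_pow, two_nsmul_eq_zero, smul_zero, zero_add]
  rw [map_add, map_add, D.leibniz_pow, two_nsmul_eq_zero, zero_add, map_cube, map_mul_sq,
    smul_add]

namespace MvPowerSeries

variable {σ R : Type*} [CommSemiring R]

theorem coeff_mul_eq_zero_of_forall_le {m : σ →₀ ℕ} {f : MvPowerSeries σ R}
    (hf : ∀ n ≤ m, coeff n f = 0) (g : MvPowerSeries σ R) : coeff m (g * f) = 0 := by
  classical
  rw [coeff_mul]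
  refine Finset.sum_eq_zero fun p hp => ?_
  rw [hf p.2 (Finset.HasAntidiagonal.antidiagonal.snd_le hp), mul_zero]

theorem coeff_monomial_mul_self (n : σ →₀ ℕ) (a : R) (φ : MvPowerSeries σ R) :
    coeff n (monomial n a * φ) = a * constantCoeff φ := by
  rw [coeff_monomial_mul, if_pos le_rfl, tsub_self, coeff_zero_eq_constantCoeff]

theorem coeff_sq_add_cube_add_mul_sq_eq_zero_of_le [DecidableEq σ] {x y z : σ} (hx : x ≠ y)
    (hz : z ≠ y) {n : σ →₀ ℕ} (hn : n ≤ single y 2) :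
    coeff n (X x ^ 2 + X y ^ 3 + X z * X y ^ 2 : MvPowerSeries σ R) = 0 := by
  have coeff_monomial_eq_zero (e : σ →₀ ℕ) (he : ¬ e ≤ single y 2) :
      coeff n (monomial e (1 : R)) = 0 := by
    rw [coeff_monomial, if_neg fun h : n = e => he (h ▸ hn)]
  rw [X_pow_eq x, X_pow_eq y 3, X_pow_eq y 2, X, monomial_mul_monomial, one_mul, map_add, map_add,
    coeff_monomial_eq_zero, coeff_monomial_eq_zero, coeff_monomial_eq_zero, add_zero, add_zero]
  · exact fun h => by simpa [single_apply, hz] using h z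
  · exact fun h => by simpa using h y
  · exact fun h => by simpa [single_apply, hx] using h x

end MvPowerSeries

/-- Let `f̃ = x² + y³ + z·y²` over a field of characteristic `2`.  There is no `k`-linear
derivation `d` of `k⟦x,y,z⟧` with `d f̃ ∈ (f̃)` whose values have constant terms
`d x (0) = 0`, `d y (0) = 0` and `d z (0) = 1`. -/
theorem stmt_18 (k : Type) [Field k] [CharP k 2] :
    ¬ ∃ d : Derivation k (MvPowerSeries (Fin 3) k) (MvPowerSeries (Fin 3) k),
      d ((X 0) ^ 2 + (X 1) ^ 3 + X 2 * (X 1) ^ 2) ∈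
        Ideal.span {((X 0) ^ 2 + (X 1) ^ 3 + X 2 * (X 1) ^ 2 : MvPowerSeries (Fin 3) k)} ∧
      constantCoeff (σ := Fin 3) (R := k) (d (X 0)) = 0 ∧
      constantCoeff (σ := Fin 3) (R := k) (d (X 1)) = 0 ∧
      constantCoeff (σ := Fin 3) (R := k) (d (X 2)) = 1 := by
  rintro ⟨d, hmem, -, h1, h2⟩
  obtain ⟨g, hg⟩ := Ideal.mem_span_singleton'.mp hmem
  have multiple_coeff : coeff (single 1 2) (g * (X 0 ^ 2 + X 1 ^ 3 + X 2 * X 1 ^ 2)) = 0 :=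
    coeff_mul_eq_zero_of_forall_le
      (fun _ hn => coeff_sq_add_cube_add_mul_sq_eq_zero_of_le (by decide) (by decide) hn) g
  have derivative_coeff : coeff (single 1 2) (d (X 0 ^ 2 + X 1 ^ 3 + X 2 * X 1 ^ 2)) = 1 := by
    rw [d.map_sq_add_cube_add_mul_sq_of_charTwo, smul_eq_mul, X_pow_eq, coeff_monomial_mul_self,
      map_add, h1, h2, zero_add, one_mul]
  rw [← hg, multiple_coeff] at derivative_coeff
  exact zero_ne_one derivative_coeff
end
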